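/- Let (V,μ) be a simple, strongly connected, finite weighted directed graph with Ricci curvature κ ≥ K > 0 and sup_x 𝒟_x ≤ Λ (Λ ≥ 1). Then for every 1-Lipschitz f : V → ℝ with 𝔪(f) = 0 and every λ ≥ 0, 𝔪(e^{λf}) ≤ e^{λ²Λ²/(4K)}. -/

import Mathlib

/-!
Let `u_t = P_t f` and `H(t) = 𝔪(e^{λ u_t})`. Positive curvature gives the gradient estimate
`Lip(u_t) ≤ e^{-Kt}`: the largest slope of `u_t` over pairs of vertices satisfies a Grönwall
inequality, because at a maximising pair the curvature bound applies. Since `𝔪(g ℒu) = 𝔪(Γ(u, g))`,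
`H' = -λ 𝔪(Γ(u_t, e^{λ u_t})) ≥ -λ² 𝔪(e^{λ u_t} Γ(u_t)) ≥ -(λ²Λ²/2) e^{-2Kt} H`, the middle step
being Hermite–Hadamard for `exp` on each edge. Integrating, `H(0) ≤ e^{λ²Λ²/(4K)} H(T)`, and
`H(T) → 1` because `u_T → 𝔪(f) = 0`.
-/

open Finset

namespace Chung

variable {V : Type*}

/-- There is a directed path of length `n` from `x` to `y` (edges are pairs of
positive weight). -/
def PathLen (μ : V → V → ℝ) (n : ℕ) (x y : V) : Prop :=
  ∃ p : ℕ → V, p 0 = x ∧ p n = y ∧ ∀ i < n, 0 < μ (p i) (p (i + 1))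

/-- The (non-symmetric) graph distance: the minimal length of a directed path. -/
noncomputable def gdist (μ : V → V → ℝ) (x y : V) : ℝ :=
  (sInf {n : ℕ | PathLen μ n x y} : ℕ)

/-- `(V,μ)` is a simple, strongly connected weighted directed graph. -/
def IsGraph (μ : V → V → ℝ) : Prop :=
  (∀ x y, 0 ≤ μ x y) ∧ (∀ x, μ x x = 0) ∧ (∀ x y, ∃ n, PathLen μ n x y)

variable [Fintype V]

/-- The transition probability kernel `P(x,y) = μ_{xy}/μ(x)`. -/
noncomputable def ker (μ : V → V → ℝ) (x y : V) : ℝ := μ x y / ∑ z, μ x z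

/-- `m` is the Perron (stationary probability) measure of the kernel `P`. -/
def IsPerron (μ : V → V → ℝ) (m : V → ℝ) : Prop :=
  (∀ x, 0 < m x) ∧ (∑ x, m x = 1) ∧ ∀ y, m y = ∑ x, m x * ker μ x y

/-- The mean transition probability kernel `𝒫 = (P + ←P)/2`,
where `←P(x,y) = m(y)P(y,x)/m(x)`. -/
noncomputable def meanKer (μ : V → V → ℝ) (m : V → ℝ) (x y : V) : ℝ :=
  (ker μ x y + m y * ker μ y x / m x) / 2

variable [DecidableEq V]

/-- The Chung Laplacian `ℒ = I − 𝒫` as a matrix. -/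
noncomputable def lapMat (μ : V → V → ℝ) (m : V → ℝ) : Matrix V V ℝ :=
  1 - Matrix.of (meanKer μ m)

/-- The Chung Laplacian applied to a function. -/
noncomputable def lap (μ : V → V → ℝ) (m : V → ℝ) (f : V → ℝ) : V → ℝ :=
  (lapMat μ m).mulVec f

/-- The heat semigroup `P_t = e^{−tℒ}` as a matrix. -/
noncomputable def heatMat (μ : V → V → ℝ) (m : V → ℝ) (t : ℝ) : Matrix V V ℝ :=
  NormedSpace.exp ((-t) • lapMat μ m)

/-- `P_t f`. -/
noncomputable def heatSG (μ : V → V → ℝ) (m : V → ℝ) (t : ℝ) (f : V → ℝ) : V → ℝ :=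
  (heatMat μ m t).mulVec f

/-- The heat kernel measure `p_x^t(y) = m(y)·(P_t δ_x)(y)/m(x)`. -/
noncomputable def heatKer (μ : V → V → ℝ) (m : V → ℝ) (t : ℝ) (x y : V) : ℝ :=
  m y * heatSG μ m t (fun z => if z = x then 1 else 0) y / m x

/-- `π` is a coupling of the probability measures `ν₀` and `ν₁`. -/
def IsCoupling (π : V → V → ℝ) (ν₀ ν₁ : V → ℝ) : Prop :=
  (∀ x y, 0 ≤ π x y) ∧ (∀ x, ∑ y, π x y = ν₀ x) ∧ (∀ y, ∑ x, π x y = ν₁ y)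

/-- Wasserstein distance for the (possibly non-symmetric) cost `d`. -/
noncomputable def wass (d : V → V → ℝ) (ν₀ ν₁ : V → ℝ) : ℝ :=
  sInf {r : ℝ | ∃ π : V → V → ℝ, IsCoupling π ν₀ ν₁ ∧ r = ∑ x, ∑ y, d x y * π x y}

/-- Lipschitz constant with respect to the (non-symmetric) distance `d`. -/
noncomputable def lipConst (d : V → V → ℝ) (f : V → ℝ) : ℝ :=
  sSup {r : ℝ | ∃ x y, x ≠ y ∧ r = (f y - f x) / d x y}

/-- The Lin–Lu–Yau type Ricci curvature of the directed graph, via the limit-free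
formula `κ(x,y) = inf {∇_{xy} ℒf : f 1-Lipschitz, ∇_{xy} f = 1}`. -/
noncomputable def ricci (μ : V → V → ℝ) (m : V → ℝ) (x y : V) : ℝ :=
  sInf {r : ℝ | ∃ f : V → ℝ, (∀ a b, f b - f a ≤ gdist μ a b) ∧
    (f y - f x) / gdist μ x y = 1 ∧
    r = (lap μ m f y - lap μ m f x) / gdist μ x y}

open Filter Topology Real

section Calculus

theorem exp_sub_one_le_half_mul_exp_add_one {h : ℝ} (hh : 0 ≤ h) :
    exp h - 1 ≤ h / 2 * (exp h + 1) := by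
  set F : ℝ → ℝ := fun y => exp y - 1 - y / 2 * (exp y + 1)
  have hF : ∀ y, HasDerivAt F ((exp y * (1 - y) - 1) / 2) y := fun y => by
    have := ((hasDerivAt_exp y).sub_const 1).sub
      (((hasDerivAt_id y).div_const 2).mul ((hasDerivAt_exp y).add_const 1))
    exact this.congr_deriv (by simp only [id]; ring)
  have hanti : AntitoneOn F (Set.Ici 0) := by
    refine antitoneOn_of_deriv_nonpos (convex_Ici 0)
      (fun y _ => (hF y).continuousAt.continuousWithinAt)
      (fun y _ => (hF y).differentiableAt.differentiableWithinAt) fun y _ => ?_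
    have h1 : 1 - y ≤ exp (-y) := by linarith [add_one_le_exp (-y)]
    have h2 : exp y * (1 - y) ≤ 1 := by
      calc exp y * (1 - y) ≤ exp y * exp (-y) := by gcongr
        _ = 1 := by rw [← exp_add, add_neg_cancel, exp_zero]
    rw [(hF y).deriv]
    linarith
  have := hanti Set.self_mem_Ici hh hh
  simp only [F, exp_zero] at this
  linarith

/-- Hermite–Hadamard for `exp`, cleared of denominators. -/
theorem sub_mul_exp_sub_exp_le {l : ℝ} (hl : 0 ≤ l) (a b : ℝ) :
    (b - a) * (exp (l * b) - exp (l * a)) ≤ l / 2 * (b - a) ^ 2 * (exp (l * a) + exp (l * b)) := by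
  wlog hab : a ≤ b generalizing a b
  · linarith [this b a (le_of_not_ge hab)]
  have hexp : exp (l * b) = exp (l * a) * exp (l * (b - a)) := by rw [← exp_add]; ring_nf
  have key := mul_le_mul_of_nonneg_left
    (exp_sub_one_le_half_mul_exp_add_one (mul_nonneg hl (sub_nonneg.2 hab)))
    (mul_nonneg (sub_nonneg.2 hab) (exp_pos (l * a)).le)
  rw [hexp]
  linarith

theorem eventually_slope_sup'_lt {ι : Type*} {s : Finset ι} (hs : s.Nonempty)
    {φ : ι → ℝ → ℝ} {φ' : ι → ℝ} {t r : ℝ} (hφ : ∀ i ∈ s, HasDerivAt (φ i) (φ' i) t)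
    (hr : ∀ i ∈ s, s.sup' hs (φ · t) = φ i t → φ' i < r) :
    ∀ᶠ z in 𝓝[>] t, slope (fun u => s.sup' hs (φ · u)) t z < r := by
  have hlt : ∀ᶠ z in 𝓝[>] t, ∀ i ∈ s, φ i z < s.sup' hs (φ · t) + r * (z - t) := by
    refine (Filter.eventually_all_finset s).2 fun i hi => ?_
    rcases (Finset.le_sup' (φ · t) hi).eq_or_lt with hmax | hlt
    · have hslope : ∀ᶠ z in 𝓝[>] t, slope (φ i) t z < r :=
        ((hasDerivAt_iff_tendsto_slope.1 (hφ i hi)).eventually_lt_const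
          (hr i hi hmax.symm)).filter_mono (nhdsWithin_mono t fun z hz => ne_of_gt hz)
      filter_upwards [hslope, self_mem_nhdsWithin] with z hz (hzt : t < z)
      rw [slope_def_field, div_lt_iff₀ (sub_pos.2 hzt)] at hz
      linarith
    · have hcont : ContinuousAt (fun z => s.sup' hs (φ · t) + r * (z - t)) t := by fun_prop
      refine (ContinuousAt.eventually_lt (hφ i hi).continuousAt hcont ?_).filter_mono
        nhdsWithin_le_nhds
      simpa only [sub_self, mul_zero, add_zero] using hlt
  filter_upwards [hlt, self_mem_nhdsWithin] with z hz (hzt : t < z)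
  rw [slope_def_field, div_lt_iff₀ (sub_pos.2 hzt)]
  linarith [(Finset.sup'_lt_iff hs).2 hz]

theorem sup'_le_sup'_mul_exp {ι : Type*} {s : Finset ι} (hs : s.Nonempty)
    {φ φ' : ι → ℝ → ℝ} {K : ℝ} (hφ : ∀ i ∈ s, ∀ t, HasDerivAt (φ i) (φ' i t) t)
    (hmax : ∀ i ∈ s, ∀ t, 0 ≤ t → s.sup' hs (φ · t) = φ i t → φ' i t ≤ K * φ i t)
    {t : ℝ} (ht : 0 ≤ t) :
    s.sup' hs (φ · t) ≤ s.sup' hs (φ · 0) * exp (K * t) := by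
  have hcont : Continuous fun t => s.sup' hs (φ · t) :=
    Continuous.finset_sup'_apply hs fun i hi =>
      continuous_iff_continuousAt.2 fun t => (hφ i hi t).continuousAt
  have hslope : ∀ x ∈ Set.Ico 0 t, ∀ r, K * s.sup' hs (φ · x) < r →
      ∃ᶠ z in 𝓝[>] x, (z - x)⁻¹ * (s.sup' hs (φ · z) - s.sup' hs (φ · x)) < r := by
    intro x hx r hr
    refine (eventually_slope_sup'_lt hs (fun i hi => hφ i hi x) fun i hi hmaxi => ?_).frequently
    exact (hmax i hi x hx.1 hmaxi).trans_lt (hmaxi ▸ hr)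
  have := le_gronwallBound_of_liminf_deriv_right_le hcont.continuousOn hslope le_rfl
    (fun x _ => (add_zero _).ge) t ⟨ht, le_rfl⟩
  rwa [gronwallBound_ε0, sub_zero] at this

/-- `exp ((a / k) (1 - e^{-ks})) * H s` is nondecreasing. -/
theorem le_exp_div_mul_of_hasDerivAt {H H' : ℝ → ℝ} {a k T : ℝ} (ha : 0 ≤ a) (hk : 0 < k)
    (hH : ∀ s, HasDerivAt H (H' s) s) (hH' : ∀ s, 0 ≤ s → -(a * exp (-(k * s)) * H s) ≤ H' s)
    (hT : 0 ≤ T) (hHT : 0 ≤ H T) : H 0 ≤ exp (a / k) * H T := by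
  set G : ℝ → ℝ := fun s => exp (a / k * (1 - exp (-(k * s)))) * H s
  have hG : ∀ s, HasDerivAt G
      (exp (a / k * (1 - exp (-(k * s)))) * (a * exp (-(k * s)) * H s + H' s)) s := fun s => by
    have hexp : HasDerivAt (fun s => a / k * (1 - exp (-(k * s)))) (a * exp (-(k * s))) s := by
      have := (((hasDerivAt_id s).const_mul k).neg.exp.const_sub 1).const_mul (a / k)
      exact this.congr_deriv (by field_simp; simp)
    exact (hexp.exp.mul (hH s)).congr_deriv (by ring)
  have hmono : MonotoneOn G (Set.Ici 0) :=
    monotoneOn_of_deriv_nonneg (convex_Ici 0)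
      (fun s _ => (hG s).continuousAt.continuousWithinAt)
      (fun s _ => (hG s).differentiableAt.differentiableWithinAt) fun s hs => by
        rw [interior_Ici] at hs
        rw [(hG s).deriv]
        exact mul_nonneg (exp_pos _).le (by linarith [hH' s hs.le])
  calc H 0 = G 0 := by simp [G]
    _ ≤ G T := hmono Set.self_mem_Ici hT hT
    _ ≤ exp (a / k) * H T := by
      refine mul_le_mul_of_nonneg_right (exp_le_exp.2 ?_) hHT
      have : 0 < exp (-(k * T)) := exp_pos _
      have : 0 ≤ a / k := div_nonneg ha hk.le
      nlinarith

end Calculus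

section Graph

variable {V : Type*} {μ : V → V → ℝ}

theorem gdist_nonneg (μ : V → V → ℝ) (x y : V) : 0 ≤ gdist μ x y := Nat.cast_nonneg _

theorem gdist_self (μ : V → V → ℝ) (x : V) : gdist μ x x = 0 := by
  have h0 : PathLen μ 0 x x := ⟨fun _ => x, rfl, rfl, fun i hi => absurd hi i.not_lt_zero⟩
  have h : sInf {n : ℕ | PathLen μ n x x} = 0 := Nat.sInf_eq_zero.2 (Or.inl h0)
  simp [gdist, h]

theorem IsGraph.gdist_pos (hG : IsGraph μ) {x y : V} (hxy : x ≠ y) : 0 < gdist μ x y := by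
  have hmem := Nat.sInf_mem (hG.2.2 x y)
  refine Nat.cast_pos.2 (Nat.pos_of_ne_zero fun h0 => ?_)
  obtain ⟨p, hp0, hpn, -⟩ := h0 ▸ hmem
  exact hxy (hp0 ▸ hpn)

theorem IsGraph.forall_sub_le_mul_gdist_iff (hG : IsGraph μ) (u : V → ℝ) (c : ℝ) :
    (∀ a b, u b - u a ≤ c * gdist μ a b) ↔
      ∀ a b, a ≠ b → (u b - u a) / gdist μ a b ≤ c := by
  refine ⟨fun hu a b hab => (div_le_iff₀ (hG.gdist_pos hab)).2 (hu a b), fun hu a b => ?_⟩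
  rcases eq_or_ne a b with rfl | hab
  · simp [gdist_self]
  · exact (div_le_iff₀ (hG.gdist_pos hab)).1 (hu a b hab)

theorem eq_of_sub_le_mul_gdist_of_nonpos {u : V → ℝ} {c : ℝ} (hc : c ≤ 0)
    (hu : ∀ a b, u b - u a ≤ c * gdist μ a b) (a b : V) : u a = u b := by
  have := mul_nonpos_of_nonpos_of_nonneg hc (gdist_nonneg μ a b)
  have := mul_nonpos_of_nonpos_of_nonneg hc (gdist_nonneg μ b a)
  linarith [hu a b, hu b a]

variable [Fintype V] {m : V → ℝ}

theorem IsGraph.sum_pos [Nontrivial V] (hG : IsGraph μ) (x : V) : 0 < ∑ z, μ x z := by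
  obtain ⟨y, hy⟩ := exists_ne x
  obtain ⟨n, p, hp0, hpn, hstep⟩ := hG.2.2 x y
  have hn : 0 < n := Nat.pos_of_ne_zero <| by rintro rfl; exact hy (hpn.symm.trans hp0)
  have h1 : 0 < μ x (p 1) := hp0 ▸ hstep 0 hn
  exact h1.trans_le (single_le_sum (fun z _ => hG.1 x z) (mem_univ _))

theorem IsGraph.ker_nonneg [Nontrivial V] (hG : IsGraph μ) (x y : V) : 0 ≤ ker μ x y :=
  div_nonneg (hG.1 x y) (hG.sum_pos x).le

theorem IsGraph.sum_ker [Nontrivial V] (hG : IsGraph μ) (x : V) : ∑ y, ker μ x y = 1 := by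
  simp only [ker, ← sum_div, div_self (hG.sum_pos x).ne']

theorem IsGraph.ker_eq_zero (hG : IsGraph μ) {x y : V} (h : ¬ 0 < μ x y) : ker μ x y = 0 := by
  simp [ker, le_antisymm (not_lt.1 h) (hG.1 x y)]

theorem IsGraph.meanKer_nonneg [Nontrivial V] (hG : IsGraph μ) (hP : IsPerron μ m) (x y : V) :
    0 ≤ meanKer μ m x y := by
  have := hG.ker_nonneg x y
  have := hG.ker_nonneg y x
  have := (hP.1 x).le
  have := (hP.1 y).le
  unfold meanKer
  positivity

theorem IsGraph.sum_meanKer [Nontrivial V] (hG : IsGraph μ) (hP : IsPerron μ m) (x : V) :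
    ∑ y, meanKer μ m x y = 1 := by
  simp only [meanKer, ← sum_div, sum_add_distrib, hG.sum_ker, ← hP.2.2 x,
    div_self (hP.1 x).ne']
  norm_num

theorem IsGraph.adj_of_meanKer_pos (hG : IsGraph μ) {x y : V} (h : 0 < meanKer μ m x y) :
    0 < μ x y ∨ 0 < μ y x := by
  by_contra! hc
  simp [meanKer, hG.ker_eq_zero hc.1.not_gt, hG.ker_eq_zero hc.2.not_gt] at h

theorem IsPerron.mul_meanKer_comm (hP : IsPerron μ m) (x y : V) :
    m x * meanKer μ m x y = m y * meanKer μ m y x := by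
  have := (hP.1 x).ne'
  have := (hP.1 y).ne'
  unfold meanKer
  field_simp
  ring

theorem IsPerron.sum_sum_mul_meanKer_swap (hP : IsPerron μ m) (F : V → V → ℝ) :
    ∑ x, ∑ y, m x * meanKer μ m x y * F x y = ∑ x, ∑ y, m x * meanKer μ m x y * F y x := by
  rw [sum_comm]
  exact sum_congr rfl fun x _ => sum_congr rfl fun y _ => by rw [hP.mul_meanKer_comm]

end Graph

section CarreDuChamp

variable {V : Type*} [Fintype V] {μ : V → V → ℝ} {m : V → ℝ}

/-- The paper's `Γ(f, g)`. -/
noncomputable def carreDuChamp (μ : V → V → ℝ) (m : V → ℝ) (f g : V → ℝ) (x : V) : ℝ :=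
  (∑ y, meanKer μ m x y * ((f y - f x) * (g y - g x))) / 2

theorem IsGraph.sum_carreDuChamp_exp_le [Nontrivial V] (hG : IsGraph μ) (hP : IsPerron μ m)
    {l : ℝ} (hl : 0 ≤ l) (u : V → ℝ) :
    ∑ x, carreDuChamp μ m u (fun y => exp (l * u y)) x * m x ≤
      l * ∑ x, exp (l * u x) * carreDuChamp μ m u u x * m x := by
  set E : V → ℝ := fun y => exp (l * u y)
  set S : (V → V → ℝ) → ℝ := fun F => ∑ x, ∑ y, m x * meanKer μ m x y * F x y
  have hlhs : ∑ x, carreDuChamp μ m u E x * m x = S (fun x y => (u y - u x) * (E y - E x)) / 2 := by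
    simp only [S, carreDuChamp, sum_div, div_mul_eq_mul_div, sum_mul]
    exact sum_congr rfl fun x _ => sum_congr rfl fun y _ => by ring
  have hrhs : ∑ x, E x * carreDuChamp μ m u u x * m x =
      S (fun x y => (u y - u x) ^ 2 * E x) / 2 := by
    simp only [S, carreDuChamp, sum_div, mul_div_assoc', div_mul_eq_mul_div, mul_sum, sum_mul]
    exact sum_congr rfl fun x _ => sum_congr rfl fun y _ => by ring
  have hle : S (fun x y => (u y - u x) * (E y - E x)) ≤
      S (fun x y => l / 2 * (u y - u x) ^ 2 * (E x + E y)) :=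
    sum_le_sum fun x _ => sum_le_sum fun y _ => mul_le_mul_of_nonneg_left
      (sub_mul_exp_sub_exp_le hl (u x) (u y)) (mul_nonneg (hP.1 x).le (hG.meanKer_nonneg hP x y))
  have hswap : S (fun x y => (u y - u x) ^ 2 * E y) = S (fun x y => (u y - u x) ^ 2 * E x) :=
    (hP.sum_sum_mul_meanKer_swap _).trans
      (sum_congr rfl fun x _ => sum_congr rfl fun y _ => by ring)
  have hsplit : S (fun x y => l / 2 * (u y - u x) ^ 2 * (E x + E y)) =
      l / 2 * (S (fun x y => (u y - u x) ^ 2 * E x) + S (fun x y => (u y - u x) ^ 2 * E y)) := by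
    simp only [S, mul_sum, ← sum_add_distrib]
    exact sum_congr rfl fun x _ => sum_congr rfl fun y _ => by ring
  rw [hlhs, hrhs]
  rw [hsplit, hswap] at hle
  linarith

theorem IsGraph.carreDuChamp_self_le [Nontrivial V] (hG : IsGraph μ) (hP : IsPerron μ m)
    {Λ c : ℝ} (hc : 0 ≤ c)
    (hD : ∀ x y : V, (0 < μ x y ∨ 0 < μ y x) → max (gdist μ x y) (gdist μ y x) ≤ Λ)
    {u : V → ℝ} (hu : ∀ a b, u b - u a ≤ c * gdist μ a b) (x : V) :
    carreDuChamp μ m u u x ≤ c ^ 2 * Λ ^ 2 / 2 := by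
  have hterm : ∀ y, meanKer μ m x y * ((u y - u x) * (u y - u x)) ≤
      meanKer μ m x y * (c * Λ) ^ 2 := fun y => by
    rcases (hG.meanKer_nonneg hP x y).eq_or_lt with h0 | hpos
    · simp [← h0]
    have hΛ := hD x y (hG.adj_of_meanKer_pos hpos)
    have h1 := (hu x y).trans (mul_le_mul_of_nonneg_left (le_max_left _ _ |>.trans hΛ) hc)
    have h2 := (hu y x).trans (mul_le_mul_of_nonneg_left (le_max_right _ _ |>.trans hΛ) hc)
    rw [← sq]
    exact mul_le_mul_of_nonneg_left (sq_le_sq' (by linarith) h1) hpos.le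
  calc carreDuChamp μ m u u x ≤ (∑ y, meanKer μ m x y * (c * Λ) ^ 2) / 2 :=
        div_le_div_of_nonneg_right (sum_le_sum fun y _ => hterm y) zero_le_two
    _ = c ^ 2 * Λ ^ 2 / 2 := by rw [← sum_mul, hG.sum_meanKer hP]; ring

end CarreDuChamp

section Laplacian

variable {V : Type*} [Fintype V] [DecidableEq V] {μ : V → V → ℝ} {m : V → ℝ}

theorem lap_smul (μ : V → V → ℝ) (m : V → ℝ) (c : ℝ) (f : V → ℝ) :
    lap μ m (c • f) = c • lap μ m f :=
  Matrix.mulVec_smul _ _ _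

theorem IsGraph.lap_apply [Nontrivial V] (hG : IsGraph μ) (hP : IsPerron μ m) (f : V → ℝ)
    (x : V) : lap μ m f x = ∑ y, meanKer μ m x y * (f x - f y) := by
  have h : lap μ m f x = f x - ∑ y, meanKer μ m x y * f y := by
    rw [lap, lapMat, Matrix.sub_mulVec, Matrix.one_mulVec]
    simp [Matrix.mulVec, dotProduct]
  simp only [h, mul_sub, sum_sub_distrib, ← sum_mul, hG.sum_meanKer hP, one_mul]

theorem IsGraph.sum_mul_lap_mul [Nontrivial V] (hG : IsGraph μ) (hP : IsPerron μ m)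
    (f g : V → ℝ) : ∑ x, g x * lap μ m f x * m x = ∑ x, carreDuChamp μ m f g x * m x := by
  have h1 : ∑ x, g x * lap μ m f x * m x =
      ∑ x, ∑ y, m x * meanKer μ m x y * (g x * (f x - f y)) :=
    sum_congr rfl fun x _ => by
      rw [hG.lap_apply hP, mul_sum, sum_mul]
      exact sum_congr rfl fun y _ => by ring
  have h2 := hP.sum_sum_mul_meanKer_swap fun x y => g x * (f x - f y)
  have h3 : ∑ x, carreDuChamp μ m f g x * m x =
      (∑ x, ∑ y, m x * meanKer μ m x y * (g x * (f x - f y)) +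
        ∑ x, ∑ y, m x * meanKer μ m x y * (g y * (f y - f x))) / 2 := by
    simp only [carreDuChamp, ← sum_add_distrib, sum_div, div_mul_eq_mul_div, sum_mul]
    exact sum_congr rfl fun x _ => sum_congr rfl fun y _ => by ring
  rw [h3, ← h2, h1]
  ring

theorem IsGraph.sum_lap_mul [Nontrivial V] (hG : IsGraph μ) (hP : IsPerron μ m) (f : V → ℝ) :
    ∑ x, lap μ m f x * m x = 0 := by
  simpa [carreDuChamp] using hG.sum_mul_lap_mul hP f 1

end Laplacian

section Curvature

variable {V : Type*} [Fintype V] [DecidableEq V] {μ : V → V → ℝ} {m : V → ℝ} {K : ℝ}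

theorem le_div_gdist_of_le_ricci (hK : 0 < K) {x y : V} (hKxy : K ≤ ricci μ m x y) {g : V → ℝ}
    (hg : ∀ a b, g b - g a ≤ gdist μ a b) (hgxy : (g y - g x) / gdist μ x y = 1) :
    K ≤ (lap μ m g y - lap μ m g x) / gdist μ x y := by
  by_cases hbdd : BddBelow {r : ℝ | ∃ f : V → ℝ, (∀ a b, f b - f a ≤ gdist μ a b) ∧
      (f y - f x) / gdist μ x y = 1 ∧ r = (lap μ m f y - lap μ m f x) / gdist μ x y}
  · exact hKxy.trans (csInf_le hbdd ⟨g, hg, hgxy, rfl⟩)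
  · rw [ricci, Real.sInf_of_not_bddBelow hbdd] at hKxy
    exact absurd hKxy hK.not_ge

/-- For `c > 0` this is the definition of `ricci` applied to `c⁻¹ • u`; for `c ≤ 0`, `u` is
constant. -/
theorem IsGraph.mul_gdist_le_lap_sub_lap [Nontrivial V] (hG : IsGraph μ) (hP : IsPerron μ m)
    (hK : 0 < K) (hcurv : ∀ x y : V, x ≠ y → K ≤ ricci μ m x y) {u : V → ℝ} {c : ℝ}
    (hu : ∀ a b, u b - u a ≤ c * gdist μ a b) {x y : V} (hxy : x ≠ y)
    (huxy : u y - u x = c * gdist μ x y) :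
    K * (c * gdist μ x y) ≤ lap μ m u y - lap μ m u x := by
  have hd := hG.gdist_pos hxy
  rcases le_or_gt c 0 with hc | hc
  · have hconst := eq_of_sub_le_mul_gdist_of_nonpos hc hu
    have hlap : ∀ z, lap μ m u z = 0 := fun z => by
      rw [hG.lap_apply hP]
      exact sum_eq_zero fun w _ => by rw [hconst z w, sub_self, mul_zero]
    rw [← huxy, hconst y x, hlap, hlap]
    simp
  have hg : ∀ a b, (c⁻¹ • u) b - (c⁻¹ • u) a ≤ gdist μ a b := fun a b => by
    simpa [← mul_sub, inv_mul_le_iff₀ hc] using hu a b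
  have hgxy : ((c⁻¹ • u) y - (c⁻¹ • u) x) / gdist μ x y = 1 := by
    simp [← mul_sub, huxy, hc.ne', hd.ne']
  have := le_div_gdist_of_le_ricci hK (hcurv x y hxy) hg hgxy
  rw [lap_smul, le_div_iff₀ hd] at this
  simp only [Pi.smul_apply, smul_eq_mul, ← mul_sub] at this
  rw [le_inv_mul_iff₀ hc] at this
  linarith

end Curvature

section HeatSemigroup

variable {V : Type*} [Fintype V] [DecidableEq V] {μ : V → V → ℝ} {m : V → ℝ} {K : ℝ}

@[simp]
theorem heatSG_zero (μ : V → V → ℝ) (m : V → ℝ) (f : V → ℝ) : heatSG μ m 0 f = f := by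
  simp [heatSG, heatMat]

theorem hasDerivAt_heatSG (μ : V → V → ℝ) (m : V → ℝ) (f : V → ℝ) (x : V) (t : ℝ) :
    HasDerivAt (fun s => heatSG μ m s f x) (-lap μ m (heatSG μ m t f) x) t := by
  let : NormedRing (Matrix V V ℝ) := Matrix.linftyOpNormedRing
  let : NormedAlgebra ℝ (Matrix V V ℝ) := Matrix.linftyOpNormedAlgebra
  let L : Matrix V V ℝ →L[ℝ] ℝ := LinearMap.toContinuousLinearMap
    { toFun := fun A => A.mulVec f x
      map_add' := fun A B => by simp [Matrix.add_mulVec]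
      map_smul' := fun c A => by simp [Matrix.smul_mulVec] }
  have h := L.hasFDerivAt.comp_hasDerivAt t (hasDerivAt_exp_smul_const' (𝕂 := ℝ) (-lapMat μ m) t)
  have hfun : (fun s => heatSG μ m s f x) = L ∘ fun s => NormedSpace.exp (s • -lapMat μ m) := by
    ext s
    simp [L, heatSG, heatMat, neg_smul, smul_neg]
  have hval : L (-lapMat μ m * NormedSpace.exp (t • -lapMat μ m)) =
      -lap μ m (heatSG μ m t f) x := by
    simp [L, lap, heatSG, heatMat, Matrix.neg_mulVec, ← Matrix.mulVec_mulVec, neg_smul, smul_neg]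
  rw [hfun, ← hval]
  exact h

theorem IsGraph.sum_heatSG_mul [Nontrivial V] (hG : IsGraph μ) (hP : IsPerron μ m)
    (f : V → ℝ) (t : ℝ) : ∑ x, heatSG μ m t f x * m x = ∑ x, f x * m x := by
  have hderiv : ∀ s, HasDerivAt (fun s => ∑ x, heatSG μ m s f x * m x) 0 s := fun s =>
    (HasDerivAt.fun_sum fun x _ => (hasDerivAt_heatSG μ m f x s).mul_const (m x)).congr_deriv
      (by simp [neg_mul, sum_neg_distrib, hG.sum_lap_mul hP])
  simpa using is_const_of_deriv_eq_zero (fun s => (hderiv s).differentiableAt)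
    (fun s => (hderiv s).deriv) t 0

theorem IsGraph.heatSG_sub_le [Nontrivial V] (hG : IsGraph μ) (hP : IsPerron μ m) (hK : 0 < K)
    (hcurv : ∀ x y : V, x ≠ y → K ≤ ricci μ m x y) {f : V → ℝ}
    (hf : ∀ a b, f b - f a ≤ gdist μ a b) {t : ℝ} (ht : 0 ≤ t) (a b : V) :
    heatSG μ m t f b - heatSG μ m t f a ≤ exp (-(K * t)) * gdist μ a b := by
  obtain ⟨x, y, hxy⟩ := exists_pair_ne V
  set s := (univ : Finset V).offDiag
  have hs : s.Nonempty := ⟨(x, y), by simpa [s] using hxy⟩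
  have hmem : ∀ p : V × V, p ∈ s ↔ p.1 ≠ p.2 := by simp [s]
  set φ : V × V → ℝ → ℝ := fun p t => (heatSG μ m t f p.2 - heatSG μ m t f p.1) / gdist μ p.1 p.2
  have hlip : ∀ t c, (∀ a b, heatSG μ m t f b - heatSG μ m t f a ≤ c * gdist μ a b) ↔
      s.sup' hs (φ · t) ≤ c := fun t c => by
    rw [hG.forall_sub_le_mul_gdist_iff, Finset.sup'_le_iff]
    simp [hmem, φ]
  have hderiv : ∀ p ∈ s, ∀ t, HasDerivAt (φ p)
      ((-lap μ m (heatSG μ m t f) p.2 - -lap μ m (heatSG μ m t f) p.1) / gdist μ p.1 p.2) t :=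
    fun p _ t => ((hasDerivAt_heatSG μ m f p.2 t).sub (hasDerivAt_heatSG μ m f p.1 t)).div_const _
  have hmax : ∀ p ∈ s, ∀ t, 0 ≤ t → s.sup' hs (φ · t) = φ p t →
      (-lap μ m (heatSG μ m t f) p.2 - -lap μ m (heatSG μ m t f) p.1) / gdist μ p.1 p.2 ≤
        -K * φ p t := by
    intro p hp t _ hpt
    have hd := hG.gdist_pos ((hmem p).1 hp)
    have hslope : heatSG μ m t f p.2 - heatSG μ m t f p.1 = φ p t * gdist μ p.1 p.2 := by
      simp only [φ]
      field_simp
    have := hG.mul_gdist_le_lap_sub_lap hP hK hcurv ((hlip t _).2 hpt.le) ((hmem p).1 hp) hslope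
    rw [div_le_iff₀ hd]
    linarith
  have h0 : s.sup' hs (φ · 0) ≤ 1 := (hlip 0 1).1 (by simpa using hf)
  refine (hlip t _).2 ?_ a b
  calc s.sup' hs (φ · t) ≤ s.sup' hs (φ · 0) * exp (-K * t) :=
        sup'_le_sup'_mul_exp hs hderiv hmax ht
    _ ≤ exp (-(K * t)) := by
      rw [neg_mul]
      exact mul_le_of_le_one_left (exp_pos _).le h0

end HeatSemigroup

section LaplaceFunctional

variable {V : Type*} [Fintype V] [DecidableEq V] {μ : V → V → ℝ} {m : V → ℝ} {K Λ : ℝ}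

theorem IsGraph.hasDerivAt_sum_exp_heatSG [Nontrivial V] (hG : IsGraph μ) (hP : IsPerron μ m)
    (l : ℝ) (f : V → ℝ) (t : ℝ) :
    HasDerivAt (fun s => ∑ x, exp (l * heatSG μ m s f x) * m x)
      (-(l * ∑ x, carreDuChamp μ m (heatSG μ m t f)
        (fun y => exp (l * heatSG μ m t f y)) x * m x)) t := by
  have := HasDerivAt.fun_sum fun x (_ : x ∈ univ) =>
    (((hasDerivAt_heatSG μ m f x t).const_mul l).exp).mul_const (m x)
  refine this.congr_deriv ?_
  rw [← hG.sum_mul_lap_mul hP, mul_sum, ← sum_neg_distrib]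
  exact sum_congr rfl fun x _ => by ring

theorem IsGraph.mul_sum_carreDuChamp_exp_heatSG_le [Nontrivial V] (hG : IsGraph μ)
    (hP : IsPerron μ m) (hK : 0 < K) (hcurv : ∀ x y : V, x ≠ y → K ≤ ricci μ m x y)
    (hD : ∀ x y : V, (0 < μ x y ∨ 0 < μ y x) → max (gdist μ x y) (gdist μ y x) ≤ Λ)
    {f : V → ℝ} (hf : ∀ a b, f b - f a ≤ gdist μ a b) {l : ℝ} (hl : 0 ≤ l) {t : ℝ} (ht : 0 ≤ t) :
    l * ∑ x, carreDuChamp μ m (heatSG μ m t f) (fun y => exp (l * heatSG μ m t f y)) x * m x ≤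
      l ^ 2 * Λ ^ 2 / 2 * exp (-(2 * K * t)) * ∑ x, exp (l * heatSG μ m t f x) * m x := by
  set u := heatSG μ m t f
  have hΓ x : carreDuChamp μ m u u x ≤ exp (-(K * t)) ^ 2 * Λ ^ 2 / 2 :=
    hG.carreDuChamp_self_le hP (exp_pos _).le hD (hG.heatSG_sub_le hP hK hcurv hf ht) x
  calc l * ∑ x, carreDuChamp μ m u (fun y => exp (l * u y)) x * m x
      ≤ l * (l * ∑ x, exp (l * u x) * carreDuChamp μ m u u x * m x) :=
        mul_le_mul_of_nonneg_left (hG.sum_carreDuChamp_exp_le hP hl u) hl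
    _ ≤ l * (l * ∑ x, exp (l * u x) * (exp (-(K * t)) ^ 2 * Λ ^ 2 / 2) * m x) := by
        refine mul_le_mul_of_nonneg_left (mul_le_mul_of_nonneg_left
          (sum_le_sum fun x _ => ?_) hl) hl
        exact mul_le_mul_of_nonneg_right
          (mul_le_mul_of_nonneg_left (hΓ x) (exp_pos _).le) (hP.1 x).le
    _ = l ^ 2 * Λ ^ 2 / 2 * exp (-(2 * K * t)) * ∑ x, exp (l * u x) * m x := by
        rw [mul_sum, mul_sum, mul_sum, ← exp_nat_mul]
        exact sum_congr rfl fun x _ => by push_cast; ring_nf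

theorem IsGraph.tendsto_heatSG_atTop [Nontrivial V] (hG : IsGraph μ) (hP : IsPerron μ m)
    (hK : 0 < K) (hcurv : ∀ x y : V, x ≠ y → K ≤ ricci μ m x y) {f : V → ℝ}
    (hf : ∀ a b, f b - f a ≤ gdist μ a b) (hmean : ∑ x, f x * m x = 0) (x : V) :
    Tendsto (fun t => heatSG μ m t f x) atTop (𝓝 0) := by
  obtain ⟨D, hD⟩ := (Set.finite_range (Function.uncurry (gdist μ))).bddAbove
  have hdist : ∀ a b, gdist μ a b ≤ D := fun a b => hD ⟨(a, b), rfl⟩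
  have hbound : ∀ t, 0 ≤ t → |heatSG μ m t f x| ≤ exp (-(K * t)) * D := fun t ht => by
    have hmean_t : ∑ y, heatSG μ m t f y * m y = 0 := (hG.sum_heatSG_mul hP f t).trans hmean
    obtain ⟨a, -, ha⟩ := exists_le_of_sum_le (f := fun y => heatSG μ m t f y * m y)
      (g := 0) univ_nonempty (by simpa using hmean_t.le)
    obtain ⟨b, -, hb⟩ := exists_le_of_sum_le (f := 0)
      (g := fun y => heatSG μ m t f y * m y) univ_nonempty (by simpa using hmean_t.ge)
    have hlip := hG.heatSG_sub_le hP hK hcurv hf ht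
    have := mul_le_mul_of_nonneg_left (hdist a x) (exp_pos (-(K * t))).le
    have := mul_le_mul_of_nonneg_left (hdist x b) (exp_pos (-(K * t))).le
    have := nonpos_of_mul_nonpos_left ha (hP.1 a)
    have := nonneg_of_mul_nonneg_left hb (hP.1 b)
    rw [abs_le]
    constructor <;> linarith [hlip a x, hlip x b]
  refine squeeze_zero_norm' (eventually_atTop.2 ⟨0, hbound⟩) ?_
  simpa using ((tendsto_exp_neg_atTop_nhds_zero.comp
    (tendsto_id.const_mul_atTop hK)).mul_const D)

end LaplaceFunctional

theorem IsPerron.sum_exp_mul_eq_one_of_subsingleton {V : Type*} [Fintype V] [Subsingleton V]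
    {μ : V → V → ℝ} {m : V → ℝ} (hP : IsPerron μ m) {f : V → ℝ}
    (hmean : ∑ x, f x * m x = 0) (l : ℝ) : ∑ x, exp (l * f x) * m x = 1 := by
  have hf x : f x = 0 := by
    rw [Fintype.sum_subsingleton _ x] at hmean
    exact (mul_eq_zero.1 hmean).resolve_right (hP.1 x).ne'
  simpa [hf] using hP.2.1

theorem laplace_functional_estimate_general {V : Type*} [Fintype V] [DecidableEq V]
    (μ : V → V → ℝ) (m : V → ℝ) (K Λ : ℝ)
    (hG : IsGraph μ) (hP : IsPerron μ m) (hK : 0 < K)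
    (hcurv : ∀ x y : V, x ≠ y → K ≤ ricci μ m x y)
    (hD : ∀ x y : V, (0 < μ x y ∨ 0 < μ y x) → max (gdist μ x y) (gdist μ y x) ≤ Λ) :
    ∀ f : V → ℝ, (∀ a b, f b - f a ≤ gdist μ a b) → (∑ x, f x * m x = 0) →
      ∀ l : ℝ, 0 ≤ l →
        ∑ x, Real.exp (l * f x) * m x ≤ Real.exp (l ^ 2 * Λ ^ 2 / (4 * K)) := by
  intro f hf hmean l hl
  rcases subsingleton_or_nontrivial V with hV | hV
  · rw [hP.sum_exp_mul_eq_one_of_subsingleton hmean l]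
    exact one_le_exp (by positivity)
  set H : ℝ → ℝ := fun t => ∑ x, exp (l * heatSG μ m t f x) * m x
  have hgronwall : ∀ T, 0 ≤ T → H 0 ≤ exp (l ^ 2 * Λ ^ 2 / (4 * K)) * H T := fun T hT => by
    have := le_exp_div_mul_of_hasDerivAt (a := l ^ 2 * Λ ^ 2 / 2) (k := 2 * K) (by positivity)
      (by positivity) (hG.hasDerivAt_sum_exp_heatSG hP l f)
      (fun s hs => neg_le_neg (hG.mul_sum_carreDuChamp_exp_heatSG_le hP hK hcurv hD hf hl hs))
      hT (sum_nonneg fun x _ => mul_nonneg (exp_pos _).le (hP.1 x).le)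
    rwa [show l ^ 2 * Λ ^ 2 / 2 / (2 * K) = l ^ 2 * Λ ^ 2 / (4 * K) by ring] at this
  have hlim : Tendsto H atTop (𝓝 1) := by
    simpa [hP.2.1] using tendsto_finsetSum univ fun x _ =>
      ((hG.tendsto_heatSG_atTop hP hK hcurv hf hmean x).const_mul l).rexp.mul_const (m x)
  simpa [H] using ge_of_tendsto (hlim.const_mul _) (eventually_atTop.2 ⟨0, hgronwall⟩)

/-- Proposition 4.2: Laplace functional estimate under a positive Ricci curvature bound
and bounded jumps. -/
theorem laplace_functional_estimate {V : Type*} [Fintype V] [DecidableEq V] [Nonempty V]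
    (μ : V → V → ℝ) (m : V → ℝ) (K Λ : ℝ)
    (hG : IsGraph μ) (hP : IsPerron μ m) (hK : 0 < K)
    (hcurv : ∀ x y : V, x ≠ y → K ≤ ricci μ m x y) (hΛ : 1 ≤ Λ)
    (hD : ∀ x y : V, (0 < μ x y ∨ 0 < μ y x) → max (gdist μ x y) (gdist μ y x) ≤ Λ) :
    ∀ f : V → ℝ, (∀ a b, f b - f a ≤ gdist μ a b) → (∑ x, f x * m x = 0) →
      ∀ l : ℝ, 0 ≤ l →
        ∑ x, Real.exp (l * f x) * m x ≤ Real.exp (l ^ 2 * Λ ^ 2 / (4 * K)) :=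
  laplace_functional_estimate_general μ m K Λ hG hP hK hcurv hD

end Chung
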